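/- Let A be an associative unital ℂ-algebra containing parabosons B_k^± (k ∈ Fin m) and parafermions F_α^± (α ∈ Fin n) satisfying the relative parabose (Greenberg–Messiah) mixed relations. For M ∈ Matrix (Fin m) (Fin m) ℂ and P ∈ Matrix (Fin n) (Fin n) ℂ define J(M,P) := (1/2)·Σ_{k,l} M_{kl}·{B_k^+, B_l^−} + (1/2)·Σ_{α,β} P_{αβ}·[F_α^+, F_β^−] ∈ A, and for Q ∈ Matrix (Fin m) (Fin n) ℂ and R ∈ Matrix (Fin n) (Fin m) ℂ define K(Q,R) := (1/2)·Σ_{k,α} ( Q_{kα}·{B_k^+, F_α^−} + R_{αk}·{F_α^+, B_k^−} ) ∈ A. Then for all such M, P, Q, R one has [J(M,P), K(Q,R)] = K(M·Q − Q·P, P·R − R·M). -/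
import Mathlib


open scoped BigOperators

noncomputable section

/-- The ringComm `[x, y] = x * y - y * x`. -/
def ringComm {A : Type*} [Ring A] (x y : A) : A := x * y - y * x

/-- The ringAnticomm `{x, y} = x * y + y * x`. -/
def ringAnticomm {A : Type*} [Ring A] (x y : A) : A := x * y + y * x

/-- A family of parabosons: `B k 1 = B_k^+`, `B k (-1) = B_k^-`, satisfying the
paraboson trilinear relations. -/
def IsParabosonFamily {A : Type*} [Ring A] [Algebra ℂ A] {ι : Type*} [DecidableEq ι]
    (B : ι → ℂ → A) : Prop :=
  ∀ (i j k : ι), ∀ ξ ∈ ({1, -1} : Set ℂ), ∀ η ∈ ({1, -1} : Set ℂ),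
    ∀ ε ∈ ({1, -1} : Set ℂ),
      ringComm (ringAnticomm (B i ξ) (B j η)) (B k ε) =
        ((ε - η) * (if j = k then (1 : ℂ) else 0)) • B i ξ +
          ((ε - ξ) * (if i = k then (1 : ℂ) else 0)) • B j η

/-- A family of parafermions: `F α 1 = F_α^+`, `F α (-1) = F_α^-`, satisfying the
parafermion trilinear relations. -/
def IsParafermionFamily {A : Type*} [Ring A] [Algebra ℂ A] {κ : Type*} [DecidableEq κ]
    (F : κ → ℂ → A) : Prop :=
  ∀ (i j k : κ), ∀ ξ ∈ ({1, -1} : Set ℂ), ∀ η ∈ ({1, -1} : Set ℂ),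
    ∀ ε ∈ ({1, -1} : Set ℂ),
      ringComm (ringComm (F i ξ) (F j η)) (F k ε) =
        ((1 / 2 : ℂ) * (ε - η) ^ 2 * (if j = k then (1 : ℂ) else 0)) • F i ξ -
          ((1 / 2 : ℂ) * (ε - ξ) ^ 2 * (if i = k then (1 : ℂ) else 0)) • F j η

/-- The relative parabose (Greenberg–Messiah) mixed trilinear relations between
a family of parabosons `B` and a family of parafermions `F`. -/
def RelParaboseMixed {A : Type*} [Ring A] [Algebra ℂ A] {ι κ : Type*} [DecidableEq ι] [DecidableEq κ]
    (B : ι → ℂ → A) (F : κ → ℂ → A) : Prop :=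
  ∀ (i j : ι) (α β : κ), ∀ ξ ∈ ({1, -1} : Set ℂ), ∀ η ∈ ({1, -1} : Set ℂ),
    ∀ ε ∈ ({1, -1} : Set ℂ),
      ringComm (ringAnticomm (B i ξ) (B j η)) (F α ε) = 0 ∧
      ringComm (ringComm (F α ξ) (F β η)) (B i ε) = 0 ∧
      ringComm (ringAnticomm (B i ξ) (F α η)) (B j ε) =
        ((ε - ξ) * (if i = j then (1 : ℂ) else 0)) • F α η ∧
      ringAnticomm (ringAnticomm (B i ξ) (F α η)) (F β ε) =
        ((1 / 2 : ℂ) * (ε - η) ^ 2 * (if α = β then (1 : ℂ) else 0)) • B i ξ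

/-- The even-part realization map `J(M,P)`. -/
def Jmap {A : Type*} [Ring A] [Algebra ℂ A] {m n : ℕ}
    (B : Fin m → ℂ → A) (F : Fin n → ℂ → A)
    (M : Matrix (Fin m) (Fin m) ℂ) (P : Matrix (Fin n) (Fin n) ℂ) : A :=
  (1 / 2 : ℂ) • ∑ k, ∑ l, M k l • ringAnticomm (B k 1) (B l (-1)) +
    (1 / 2 : ℂ) • ∑ α, ∑ β, P α β • ringComm (F α 1) (F β (-1))

/-- The odd-part realization map `K(Q,R)`. -/
def Kmap {A : Type*} [Ring A] [Algebra ℂ A] {m n : ℕ}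
    (B : Fin m → ℂ → A) (F : Fin n → ℂ → A)
    (Q : Matrix (Fin m) (Fin n) ℂ) (R : Matrix (Fin n) (Fin m) ℂ) : A :=
  (1 / 2 : ℂ) • ∑ k, ∑ α,
    (Q k α • ringAnticomm (B k 1) (F α (-1)) + R α k • ringAnticomm (F α 1) (B k (-1)))

set_option linter.unusedSectionVars false

section Helpers
variable {A : Type*} [Ring A] [Algebra ℂ A]

lemma rc_add_left (x y z : A) : ringComm (x + y) z = ringComm x z + ringComm y z := by
  simp [ringComm, add_mul, mul_add]; abel
lemma rc_add_right (x y z : A) : ringComm x (y + z) = ringComm x y + ringComm x z := by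
  simp [ringComm, add_mul, mul_add]; abel
lemma rc_smul_left (c : ℂ) (x y : A) : ringComm (c • x) y = c • ringComm x y := by
  simp [ringComm, smul_sub, smul_mul_assoc, mul_smul_comm]
lemma rc_smul_right (c : ℂ) (x y : A) : ringComm x (c • y) = c • ringComm x y := by
  simp [ringComm, smul_sub, smul_mul_assoc, mul_smul_comm]
lemma rc_sum_left {ι : Type*} (s : Finset ι) (f : ι → A) (y : A) :
    ringComm (∑ i ∈ s, f i) y = ∑ i ∈ s, ringComm (f i) y := by
  simp [ringComm, Finset.sum_mul, Finset.mul_sum, Finset.sum_sub_distrib]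
lemma rc_sum_right {ι : Type*} (s : Finset ι) (f : ι → A) (x : A) :
    ringComm x (∑ i ∈ s, f i) = ∑ i ∈ s, ringComm x (f i) := by
  simp [ringComm, Finset.sum_mul, Finset.mul_sum, Finset.sum_sub_distrib]
lemma ac_smul_left (c : ℂ) (x y : A) : ringAnticomm (c • x) y = c • ringAnticomm x y := by
  simp [ringAnticomm, smul_add, smul_mul_assoc, mul_smul_comm]
lemma ac_smul_right (c : ℂ) (x y : A) : ringAnticomm x (c • y) = c • ringAnticomm x y := by
  simp [ringAnticomm, smul_add, smul_mul_assoc, mul_smul_comm]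
lemma ac_add_left (x y z : A) : ringAnticomm (x + y) z = ringAnticomm x z + ringAnticomm y z := by
  simp [ringAnticomm, add_mul, mul_add]; abel
lemma ac_zero_left (y : A) : ringAnticomm 0 y = 0 := by simp [ringAnticomm]
lemma ac_zero_right (x : A) : ringAnticomm x 0 = 0 := by simp [ringAnticomm]
lemma ac_neg_left (x y : A) : ringAnticomm (-x) y = -ringAnticomm x y := by
  simp [ringAnticomm]; abel
lemma ac_neg_right (x y : A) : ringAnticomm x (-y) = -ringAnticomm x y := by
  simp [ringAnticomm]; abel
lemma rc_anticomm (x y z : A) :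
    ringComm x (ringAnticomm y z) =
      ringAnticomm (ringComm x y) z + ringAnticomm y (ringComm x z) := by
  simp only [ringComm, ringAnticomm]; noncomm_ring
end Helpers

section Phys
variable {A : Type*} [Ring A] [Algebra ℂ A] {m n : ℕ}
variable (B : Fin m → ℂ → A) (F : Fin n → ℂ → A)

lemma mem1 : (1 : ℂ) ∈ ({1, -1} : Set ℂ) := Set.mem_insert _ _
lemma memm1 : (-1 : ℂ) ∈ ({1, -1} : Set ℂ) := Set.mem_insert_iff.2 (Or.inr rfl)

lemma L1 (hB : IsParabosonFamily B) (hBF : RelParaboseMixed B F) (k l p : Fin m) (a : Fin n) :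
    ringComm (ringAnticomm (B k 1) (B l (-1))) (ringAnticomm (B p 1) (F a (-1))) =
      if l = p then (2 : ℂ) • ringAnticomm (B k 1) (F a (-1)) else 0 := by
  rw [rc_anticomm, (hBF k l a a 1 mem1 (-1) memm1 (-1) memm1).1,
    hB k l p 1 mem1 (-1) memm1 1 mem1, ac_zero_right]
  by_cases h : l = p <;> simp [h, ac_smul_left, ac_add_left, ac_zero_left]
  norm_num

lemma L2 (hB : IsParabosonFamily B) (hBF : RelParaboseMixed B F) (k l p : Fin m) (a : Fin n) :
    ringComm (ringAnticomm (B k 1) (B l (-1))) (ringAnticomm (F a 1) (B p (-1))) =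
      if k = p then (-2 : ℂ) • ringAnticomm (F a 1) (B l (-1)) else 0 := by
  have h0 : ringComm (ringAnticomm (B k 1) (B l (-1))) (F a 1) = 0 :=
    (hBF k l a a 1 mem1 (-1) memm1 1 mem1).1
  rw [rc_anticomm, h0, hB k l p 1 mem1 (-1) memm1 (-1) memm1, ac_zero_left]
  by_cases h : k = p <;> simp [h, ac_smul_right, ac_neg_right, ac_add_left, ac_zero_left, ac_zero_right]
  norm_num

lemma L3 (hF : IsParafermionFamily F) (hBF : RelParaboseMixed B F) (a b c : Fin n) (k : Fin m) :
    ringComm (ringComm (F a 1) (F b (-1))) (ringAnticomm (B k 1) (F c (-1))) =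
      if a = c then (-2 : ℂ) • ringAnticomm (B k 1) (F b (-1)) else 0 := by
  have h0 : ringComm (ringComm (F a 1) (F b (-1))) (B k 1) = 0 :=
    (hBF k k a b 1 mem1 (-1) memm1 1 mem1).2.1
  rw [rc_anticomm, h0, hF a b c 1 mem1 (-1) memm1 (-1) memm1, ac_zero_left]
  by_cases h : a = c <;> simp [h, ac_smul_right, ac_neg_right, sub_eq_add_neg, ac_add_left, ac_zero_left, ac_zero_right]
  norm_num

lemma L4 (hF : IsParafermionFamily F) (hBF : RelParaboseMixed B F) (a b c : Fin n) (k : Fin m) :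
    ringComm (ringComm (F a 1) (F b (-1))) (ringAnticomm (F c 1) (B k (-1))) =
      if b = c then (2 : ℂ) • ringAnticomm (F a 1) (B k (-1)) else 0 := by
  have h0 : ringComm (ringComm (F a 1) (F b (-1))) (B k (-1)) = 0 :=
    (hBF k k a b 1 mem1 (-1) memm1 (-1) memm1).2.1
  rw [rc_anticomm, h0, hF a b c 1 mem1 (-1) memm1 1 mem1, ac_zero_right]
  by_cases h : b = c <;> simp [h, ac_smul_left, ac_neg_left, sub_eq_add_neg, ac_add_left, ac_zero_left, ac_zero_right]
  norm_num
end Phys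

lemma sum_rot13 {β : Type*} [AddCommMonoid β] {a b c : Type*} [Fintype a] [Fintype b] [Fintype c]
    (f : a → b → c → β) :
    ∑ x, ∑ y, ∑ z, f x y z = ∑ z, ∑ y, ∑ x, f x y z :=
  calc ∑ x, ∑ y, ∑ z, f x y z = ∑ y, ∑ x, ∑ z, f x y z := Finset.sum_comm
    _ = ∑ y, ∑ z, ∑ x, f x y z := Finset.sum_congr rfl fun _ _ => Finset.sum_comm
    _ = ∑ z, ∑ y, ∑ x, f x y z := Finset.sum_comm

lemma sum_swap23' {β : Type*} [AddCommMonoid β] {b c : Type*} [Fintype b] [Fintype c]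
    (f : b → c → β) :
    ∑ y, ∑ z, f y z = ∑ z, ∑ y, f y z := Finset.sum_comm

theorem comm_Jmap_Kmap
 {A : Type*} [Ring A] [Algebra ℂ A] {m n : ℕ}
    (B : Fin m → ℂ → A) (F : Fin n → ℂ → A)
    (hB : IsParabosonFamily B) (hF : IsParafermionFamily F)
    (hBF : RelParaboseMixed B F)
    (M : Matrix (Fin m) (Fin m) ℂ) (P : Matrix (Fin n) (Fin n) ℂ)
    (Q : Matrix (Fin m) (Fin n) ℂ) (R : Matrix (Fin n) (Fin m) ℂ) :
    ringComm (Jmap B F M P) (Kmap B F Q R) =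
      Kmap B F (M * Q - Q * P) (P * R - R * M) := by
  unfold Jmap Kmap
  rw [rc_add_left]
  simp only [rc_smul_left, rc_smul_right, rc_sum_left, rc_sum_right, rc_add_right]
  simp only [L1 B F hB hBF, L2 B F hB hBF, L3 B F hF hBF, L4 B F hF hBF]
  simp only [smul_ite, smul_zero, smul_smul]
  simp only [Finset.sum_add_distrib, Finset.sum_ite_irrel, Finset.sum_const_zero,
    Finset.sum_ite_eq, Finset.sum_ite_eq', Finset.mem_univ, if_true]
  simp only [Matrix.sub_apply, Matrix.mul_apply, sub_smul, Finset.sum_smul, Finset.smul_sum, smul_smul, smul_sub, Finset.sum_sub_distrib]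
  have h1 : (∑ x : Fin m, ∑ x1 : Fin n, ∑ x2 : Fin m,
        (Q x x1 * (1 / 2) * (M x2 x * 2)) • ringAnticomm (B x2 1) (F x1 (-1))) =
      ∑ x : Fin m, ∑ x1 : Fin n, ∑ i : Fin m,
        (M x i * Q i x1) • ringAnticomm (B x 1) (F x1 (-1)) := by
    rw [sum_rot13]
    exact Finset.sum_congr rfl fun z _ => Finset.sum_congr rfl fun y _ =>
      Finset.sum_congr rfl fun x _ => by rw [mul_comm (Q x y)]; congr 1; ring
  have h2 : (∑ x : Fin m, ∑ x1 : Fin n, ∑ x2 : Fin m,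
        (R x1 x * (1 / 2) * (M x x2 * -2)) • ringAnticomm (F x1 1) (B x2 (-1))) =
      ∑ x : Fin m, ∑ x1 : Fin n, ∑ i : Fin m,
        (-(R x1 i * M i x)) • ringAnticomm (F x1 1) (B x (-1)) := by
    rw [sum_rot13]
    exact Finset.sum_congr rfl fun z _ => Finset.sum_congr rfl fun y _ =>
      Finset.sum_congr rfl fun x _ => by congr 1; ring
  have h3 : (∑ x : Fin m, ∑ x1 : Fin n, ∑ x2 : Fin n,
        (Q x x1 * (1 / 2) * (P x1 x2 * -2)) • ringAnticomm (B x 1) (F x2 (-1))) =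
      ∑ x : Fin m, ∑ x1 : Fin n, ∑ i : Fin n,
        (-(Q x i * P i x1)) • ringAnticomm (B x 1) (F x1 (-1)) := by
    refine Finset.sum_congr rfl fun x _ => ?_
    rw [sum_swap23']
    exact Finset.sum_congr rfl fun y _ =>
      Finset.sum_congr rfl fun z _ => by congr 1; ring
  have h4 : (∑ x : Fin m, ∑ x1 : Fin n, ∑ x2 : Fin n,
        (R x1 x * (1 / 2) * (P x2 x1 * 2)) • ringAnticomm (F x2 1) (B x (-1))) =
      ∑ x : Fin m, ∑ x1 : Fin n, ∑ i : Fin n,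
        (P x1 i * R i x) • ringAnticomm (F x1 1) (B x (-1)) := by
    refine Finset.sum_congr rfl fun x _ => ?_
    rw [sum_swap23']
    exact Finset.sum_congr rfl fun y _ =>
      Finset.sum_congr rfl fun z _ => by congr 1; ring
  rw [h1, h2, h3, h4]
  simp only [neg_smul, Finset.sum_neg_distrib]
  rw [← smul_add]
  congr 1
  abel

end
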